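/- arXiv:1701.01052 — 4 statements merged into one kernel-verified Lean document; each statement's English description precedes it below -/
import Mathlib

section
/- For x ∈ ℂ with Re(x) > 0 and p, k > 0, the integral ∫₀^∞ e^{-t^k/p} t^{x-1} dt (the p-k Gamma function) equals (p^{x/k}/k) · Γ(x/k), where Γ is the classical Gamma function. -/
/-! The integral is the Mellin transform of `t ↦ exp (-t ^ k / p)` at `x`. The substitution
`u = t ^ k` turns it into `k⁻¹` times the Mellin transform of `u ↦ exp (-u / p)` at `x / k`, and the
scaling `u = p v` turns that into `p ^ (x / k)` times Euler's integral for `Γ (x / k)`. -/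

open MeasureTheory

theorem Complex.mellin_exp_neg_div {p : ℝ} (hp : 0 < p) {s : ℂ} (hs : 0 < s.re) :
    mellin (fun t => (Real.exp (-t / p) : ℂ)) s = (p : ℂ) ^ s * Gamma s := by
  have hpow : ((p⁻¹ : ℝ) : ℂ) ^ (-s) = (p : ℂ) ^ s := by
    rw [ofReal_inv, inv_cpow _ _ (by simp [arg_ofReal_of_nonneg hp.le, Real.pi_ne_zero.symm]),
      cpow_neg, inv_inv]
  calc
    _ = mellin (fun t => (Real.exp (-(p⁻¹ * t)) : ℂ)) s := by
      simp only [div_eq_inv_mul, mul_neg]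
    _ = ((p⁻¹ : ℝ) : ℂ) ^ (-s) • GammaIntegral s := by
      rw [GammaIntegral_eq_mellin]
      exact mellin_comp_mul_left (fun u => (Real.exp (-u) : ℂ)) s (inv_pos.mpr hp)
    _ = (p : ℂ) ^ s * Gamma s := by
      rw [hpow, Gamma_eq_integral hs, smul_eq_mul]

theorem stmt1 (x : ℂ) (hx : 0 < x.re) (p k : ℝ) (hp : 0 < p) (hk : 0 < k) :
    ∫ t in Set.Ioi (0 : ℝ), (Real.exp (-(t ^ k) / p) : ℂ) * (t : ℂ) ^ (x - 1)
      = (p : ℂ) ^ (x / k) / k * Complex.Gamma (x / k) := by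
  have hxk : 0 < (x / k).re := by
    rw [Complex.div_ofReal_re]
    positivity
  calc
    _ = mellin (fun t => (Real.exp (-(t ^ k) / p) : ℂ)) x := by
      simp only [mellin, smul_eq_mul, mul_comm]
    _ = |k|⁻¹ • mellin (fun u => (Real.exp (-u / p) : ℂ)) (x / k) :=
      mellin_comp_rpow (fun u => (Real.exp (-u / p) : ℂ)) x k
    _ = (p : ℂ) ^ (x / k) / k * Complex.Gamma (x / k) := by
      rw [abs_of_pos hk, Complex.mellin_exp_neg_div hp hxk, Complex.real_smul,
        Complex.ofReal_inv]
      ring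
end

section
/- For x ∈ ℂ with Re(x) > 0, p, k > 0, and n ∈ ℕ, the p-k Pochhammer symbol equals the ratio _pΓ_k(x + nk) / _pΓ_k(x), i.e. _p(x)_{n,k} · _pΓ_k(x) = _pΓ_k(x + nk). -/
/-! Writing `s = x / k`, one has `_p(x)_{n,k} = pⁿ (s)ₙ` and `_pΓ_k(x + nk) = p^(s+n) Γ(s + n) / k`,
so the identity reduces to `Γ(s) (s)ₙ = Γ(s + n)`, valid away from the poles of `Γ`. -/

open Finset

noncomputable def pkPoch (p k : ℝ) (x : ℂ) (n : ℕ) : ℂ :=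
  ∏ i ∈ Finset.range n, (x * p / k + i * p)

noncomputable def pkGamma (p k : ℝ) (x : ℂ) : ℂ :=
  (p : ℂ) ^ (x / k) / k * Complex.Gamma (x / k)

theorem ascPochhammer_eval_eq_prod_range {R : Type*} [CommSemiring R] (n : ℕ) (r : R) :
    (ascPochhammer R n).eval r = ∏ j ∈ range n, (r + j) := by
  induction n with
  | zero => simp
  | succ n ih => simp [ascPochhammer_succ_right, ih, prod_range_succ]

theorem Complex.Gamma_mul_ascPochhammer_eval {z : ℂ} (hz : ∀ m : ℕ, z ≠ -m) (n : ℕ) :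
    Gamma z * (ascPochhammer ℂ n).eval z = Gamma (z + n) := by
  rw [← Gamma_add_nat_div_Gamma_eq z hz, mul_div_cancel₀ _ (Gamma_ne_zero hz)]

theorem Complex.ne_neg_natCast_of_re_pos {z : ℂ} (hz : 0 < z.re) (m : ℕ) : z ≠ -m := by
  rintro rfl
  simp at hz
  linarith

theorem pkPoch_eq_pow_mul_ascPochhammer (p k : ℝ) (x : ℂ) (n : ℕ) :
    pkPoch p k x n = (p : ℂ) ^ n * (ascPochhammer ℂ n).eval (x / k) := by
  have hfactor : ∀ i : ℕ, x * p / k + i * p = p * (x / k + i) := fun i => by ring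
  simp only [pkPoch, hfactor, prod_mul_distrib, prod_const, card_range,
    ascPochhammer_eval_eq_prod_range]

theorem pkGamma_add_nat_mul {p k : ℝ} (hp : p ≠ 0) (hk : k ≠ 0) (x : ℂ) (n : ℕ) :
    pkGamma p k (x + n * k) = (p : ℂ) ^ n * (p : ℂ) ^ (x / k) / k * Complex.Gamma (x / k + n) := by
  have hk' : (k : ℂ) ≠ 0 := Complex.ofReal_ne_zero.mpr hk
  have hshift : (x + n * k) / k = x / k + n := by field_simp
  rw [pkGamma, hshift, Complex.cpow_add _ _ (Complex.ofReal_ne_zero.mpr hp),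
    Complex.cpow_natCast]
  ring

theorem stmt2 (x : ℂ) (hx : 0 < x.re) (p k : ℝ) (hp : 0 < p) (hk : 0 < k) (n : ℕ) :
    pkPoch p k x n * pkGamma p k x = pkGamma p k (x + n * k) := by
  have hs : 0 < (x / k).re := by
    rw [Complex.div_ofReal_re]
    positivity
  rw [pkPoch_eq_pow_mul_ascPochhammer, pkGamma_add_nat_mul hp.ne' hk.ne',
    ← Complex.Gamma_mul_ascPochhammer_eval (Complex.ne_neg_natCast_of_re_pos hs), pkGamma]
  ring
end

section
/- For x ∈ ℂ with Re(x) > 0, p, k > 0, and integer m ≥ 2, the Gauss multiplication formula ∏_{r=0}^{m-1} _pΓ_k(x + kr/m) = (p^{(m-1)/2}/k^{m-1}) · (2π)^{(m-1)/2} · m^{1/2 - mx/k} · _pΓ_k(mx) holds. -/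
/-!
With `z = x / k`, the factors `p ^ (x / k) / k` contribute `p ^ ((m - 1) / 2) / k ^ (m - 1)`, and
the theorem reduces to Gauss's multiplication formula
`∏_{r < m} Γ(z + r / m) = (2π) ^ ((m - 1) / 2) * m ^ (1 / 2 - m z) * Γ(m z)`.
This follows from Euler's limit `Γ(s) = lim_n n ^ s n! / (s (s + 1) ⋯ (s + n))`: since
`z + r / m + j = (m z + (j m + r)) / m`, the product of the Euler sequences at the points
`z + r / m` is the Euler sequence at `m z` with index `m (n + 1) - 1`, times
`(n / (m (n + 1) - 1)) ^ (m z)`, times a factor independent of `z`. The limit of that factor is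
read off at `z = 1 / m`; it is `m ∏_{r=1}^{m-1} Γ(r / m) = √m (2π) ^ ((m - 1) / 2)`, by Euler's
reflection formula and `∏_{r=1}^{m-1} 2 sin (π r / m) = m`, the norm of
`∏_{r=1}^{m-1} (1 - ζ ^ r) = m` for a primitive `m`-th root of unity `ζ`.
-/

open Real Finset

open Filter Topology
open scoped Nat

namespace Real

lemma sin_pi_mul_succ_div_pos {n r : ℕ} (hr : r < n) : 0 < sin (π * (r + 1) / (n + 1)) := by
  apply sin_pos_of_pos_of_lt_pi (by positivity)
  rw [div_lt_iff₀ (by positivity)]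
  have : (r : ℝ) + 1 < n + 1 := by exact_mod_cast Nat.succ_lt_succ hr
  nlinarith [pi_pos]

theorem prod_sin_pi_mul_succ_div (n : ℕ) :
    ∏ r ∈ range n, sin (π * (r + 1) / (n + 1)) = (n + 1) / 2 ^ n := by
  have hζ : IsPrimitiveRoot (Complex.exp (2 * π * Complex.I / (n + 1 : ℕ))) (n + 1) :=
    Complex.isPrimitiveRoot_exp _ n.succ_ne_zero
  have hnorm : ∀ r ∈ range n, ‖1 - Complex.exp (2 * π * Complex.I / (n + 1 : ℕ)) ^ (r + 1)‖
      = 2 * sin (π * (r + 1) / (n + 1)) := by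
    intro r hr
    rw [← Complex.exp_nat_mul, norm_sub_rev]
    convert Complex.norm_exp_I_mul_ofReal_sub_one (2 * π * (r + 1) / (n + 1)) using 1
    · congr 3; push_cast; ring
    · rw [show 2 * π * (r + 1) / (n + 1) / 2 = π * (r + 1) / (n + 1) by ring,
        Real.norm_of_nonneg (by linarith [sin_pi_mul_succ_div_pos (mem_range.mp hr)])]
  have hprod := congrArg (‖·‖) hζ.prod_one_sub_pow_eq_order
  simp only [norm_prod, prod_congr rfl hnorm, prod_mul_distrib, prod_const, card_range] at hprod
  rw [eq_div_iff (by positivity), mul_comm, hprod]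
  exact_mod_cast Complex.norm_natCast (n + 1)

theorem prod_Gamma_succ_div (n : ℕ) :
    ∏ r ∈ range n, Gamma ((r + 1) / (n + 1)) = (2 * π) ^ (n / 2 : ℝ) / √(n + 1) := by
  set P := ∏ r ∈ range n, Gamma ((r + 1) / (n + 1))
  have hP : 0 < P := prod_pos fun r _ => Gamma_pos_of_pos (by positivity)
  have hreflect : ∏ r ∈ range n, Gamma (1 - (r + 1) / (n + 1)) = P := by
    rw [← prod_range_reflect]
    refine prod_congr rfl fun r hr => congrArg Gamma ?_
    have hr : r + 1 ≤ n := mem_range.mp hr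
    rw [Nat.sub_sub, add_comm 1 r, Nat.cast_sub hr]
    field_simp
    push_cast
    ring
  have hsq : P ^ 2 = (2 * π) ^ n / (n + 1) := by
    rw [sq]
    nth_rw 2 [← hreflect]
    rw [← prod_mul_distrib]
    simp only [Gamma_mul_Gamma_one_sub, prod_div_distrib, prod_const, card_range, mul_div_assoc',
      prod_sin_pi_mul_succ_div, mul_pow]
    field_simp
  rw [← sqrt_sq hP.le, hsq, sqrt_div' _ (by positivity), sqrt_eq_rpow, ← rpow_natCast,
    ← rpow_mul (by positivity)]
  ring_nf

end Real

theorem Finset.prod_range_mul_eq_prod_prod {M : Type*} [CommMonoid M] (f : ℕ → M) (m n : ℕ) :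
    ∏ l ∈ range (m * n), f l = ∏ j ∈ range n, ∏ r ∈ range m, f (j * m + r) := by
  induction n with
  | zero => simp
  | succ n ih => rw [Nat.mul_succ, prod_range_add, ih, prod_range_succ, mul_comm m n]

lemma Filter.Tendsto.of_eventually_eq_mul {α 𝕜 : Type*} [NormedField 𝕜] {l : Filter α}
    {a b c : α → 𝕜} {A B : 𝕜} (ha : Tendsto a l (𝓝 A)) (hb : Tendsto b l (𝓝 B)) (hB : B ≠ 0)
    (habc : ∀ᶠ x in l, a x = b x * c x) : Tendsto c l (𝓝 (A / B)) :=
  (ha.div hb hB).congr' <| by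
    filter_upwards [habc, hb.eventually_ne hB] with x hx hbx
    rw [Pi.div_apply, hx, mul_div_cancel_left₀ _ hbx]

namespace Complex

lemma prod_cpow_eq_cpow_sum {ι : Type*} {x : ℂ} (hx : x ≠ 0) (s : Finset ι) (f : ι → ℂ) :
    ∏ i ∈ s, x ^ f i = x ^ ∑ i ∈ s, f i := by
  simp only [cpow_def_of_ne_zero hx, ← exp_sum, mul_sum]

lemma sum_range_add_natCast_div {m : ℕ} (hm : m ≠ 0) (z : ℂ) :
    ∑ r ∈ range m, (z + r / m) = m * z + (m - 1) / 2 := by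
  have hsum (k : ℕ) : ∑ r ∈ range k, (r : ℂ) = k * (k - 1) / 2 := by
    induction k with
    | zero => simp
    | succ k ih => rw [sum_range_succ, ih]; push_cast; ring
  rw [sum_add_distrib, ← sum_div, hsum]
  simp only [sum_const, card_range, nsmul_eq_mul, add_right_inj]
  field_simp

lemma exists_prod_GammaSeq_add_div_eq {m : ℕ} (hm : m ≠ 0) :
    ∃ c : ℕ → ℂ, ∀ z : ℂ, ∀ n ≠ 0, ∏ r ∈ range m, GammaSeq (z + r / m) n =
      GammaSeq (m * z) (m * (n + 1) - 1) * ((n : ℂ) / (m * (n + 1) - 1 : ℕ)) ^ (m * z) * c n := by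
  refine ⟨fun n => (n : ℂ) ^ (((m : ℂ) - 1) / 2) * n ! ^ m * m ^ (m * (n + 1)) /
    (m * (n + 1) - 1)!, fun z n hn => ?_⟩
  have hnC : (n : ℂ) ≠ 0 := Nat.cast_ne_zero.mpr hn
  obtain ⟨N, hN⟩ : ∃ N, m * (n + 1) = N + 1 := Nat.exists_eq_add_one.mpr (by positivity)
  have hNC : (N : ℂ) ≠ 0 := by
    have : 1 < N + 1 := hN ▸ Nat.one_lt_mul_iff.mpr (by omega)
    exact Nat.cast_ne_zero.mpr (by omega)
  rw [hN, Nat.add_sub_cancel]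
  have hden : ∏ l ∈ range (N + 1), ((m : ℂ) * z + l)
      = m ^ (N + 1) * ∏ r ∈ range m, ∏ j ∈ range (n + 1), (z + r / m + j) := by
    rw [← hN, prod_range_mul_eq_prod_prod, Finset.prod_comm]
    have hfactor : ∀ r j : ℕ, (m : ℂ) * z + (j * m + r : ℕ) = m * (z + r / m + j) := by
      intro r j; push_cast; field_simp; ring
    simp only [hfactor, prod_mul_distrib, prod_const, card_range, ← pow_mul, mul_comm m]
  simp only [GammaSeq, prod_div_distrib, prod_mul_distrib, prod_const, card_range, hden,
    prod_cpow_eq_cpow_sum hnC]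
  rw [sum_range_add_natCast_div hm, cpow_add _ _ hnC]
  have hratio : ((n : ℂ) / N) ^ (m * z) = (n : ℂ) ^ (m * z) / (N : ℂ) ^ (m * z) := by
    simpa only [ofReal_natCast] using
      div_cpow_ofReal_nonneg (Nat.cast_nonneg n) (Nat.cast_nonneg N) (m * z)
  have hNpow : (N : ℂ) ^ ((m : ℂ) * z) ≠ 0 := cpow_ne_zero_iff.mpr (.inl hNC)
  rw [hratio, hN, Nat.add_sub_cancel]
  generalize ∏ r ∈ range m, ∏ j ∈ range (n + 1), (z + r / m + j) = B
  field_simp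
  exact (mul_div_mul_right _ _ (Nat.cast_ne_zero.mpr N.factorial_ne_zero)).symm

lemma tendsto_natCast_div_mul_succ_sub_one {m : ℕ} (hm : m ≠ 0) :
    Tendsto (fun n : ℕ => (n : ℂ) / (m * (n + 1) - 1 : ℕ)) atTop (𝓝 (1 / m)) := by
  have h := (tendsto_natCast_div_add_atTop (((m : ℂ) - 1) / m)).const_mul (1 / (m : ℂ))
  rw [mul_one] at h
  refine h.congr fun n => ?_
  rw [Nat.cast_sub (Nat.one_le_iff_ne_zero.mpr (by positivity))]
  push_cast
  field_simp
  ring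

lemma prod_Gamma_one_div_add_div {m : ℕ} (hm : m ≠ 0) :
    ∏ r ∈ range m, Gamma (1 / m + r / m) = (((2 * π) ^ (((m : ℝ) - 1) / 2) / √m : ℝ) : ℂ) := by
  obtain ⟨n, rfl⟩ := Nat.exists_eq_succ_of_ne_zero hm
  have hterm (r : ℕ) : 1 / ((n + 1 : ℕ) : ℂ) + r / (n + 1 : ℕ) = ((r + 1 : ℝ) / (n + 1) : ℝ) := by
    push_cast; ring
  rw [prod_range_succ]
  simp only [hterm, Gamma_ofReal, ← ofReal_prod, Real.prod_Gamma_succ_div]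
  rw [div_self (by positivity), Real.Gamma_one, ofReal_one, mul_one]
  push_cast
  ring_nf

-- At the poles of `Γ` both sides are `0`, the junk value of `Gamma` there.
theorem prod_Gamma_add_div {m : ℕ} (hm : m ≠ 0) (z : ℂ) :
    ∏ r ∈ range m, Gamma (z + r / m)
      = (((2 * π) ^ (((m : ℝ) - 1) / 2) : ℝ) : ℂ) * (m : ℂ) ^ (1 / 2 - m * z) * Gamma (m * z) := by
  have hmC : (m : ℂ) ≠ 0 := Nat.cast_ne_zero.mpr hm
  obtain ⟨c, hc⟩ := exists_prod_GammaSeq_add_div_eq hm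
  have hprod (w : ℂ) : Tendsto (fun n => ∏ r ∈ range m, GammaSeq (w + r / m) n) atTop
      (𝓝 (∏ r ∈ range m, Gamma (w + r / m))) :=
    tendsto_finsetProd _ fun r _ => GammaSeq_tendsto_Gamma _
  have hGammaSeq (w : ℂ) : Tendsto (fun n => GammaSeq w (m * (n + 1) - 1)) atTop (𝓝 (Gamma w)) :=
    (GammaSeq_tendsto_Gamma w).comp <| tendsto_atTop_mono (fun n => Nat.le_sub_one_of_lt <|
      n.lt_succ_self.trans_le (Nat.le_mul_of_pos_left _ (Nat.pos_of_ne_zero hm))) tendsto_id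
  have hslit : (1 / m : ℂ) ∈ slitPlane := by
    have hm_pos : (0 : ℝ) < m := Nat.cast_pos.mpr (Nat.pos_of_ne_zero hm)
    simpa using ofReal_mem_slitPlane.mpr (one_div_pos.mpr hm_pos)
  have hpow (w : ℂ) : Tendsto (fun n : ℕ => ((n : ℂ) / (m * (n + 1) - 1 : ℕ)) ^ w) atTop
      (𝓝 ((1 / m) ^ w)) :=
    (continuousAt_cpow_const hslit).tendsto.comp (tendsto_natCast_div_mul_succ_sub_one hm)
  -- `c` does not depend on `z`; at `z = 1 / m` the other two factors have nonzero limits.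
  have hc_lim : Tendsto c atTop (𝓝 ((((2 * π) ^ (((m : ℝ) - 1) / 2) / √m : ℝ) : ℂ) / (1 / m))) := by
    have hm_one_div : (m : ℂ) * (1 / m) = 1 := mul_one_div_cancel hmC
    have h := (hprod (1 / m)).of_eventually_eq_mul ((hGammaSeq 1).mul (hpow 1))
      (by simpa using hmC) (eventually_ne_atTop 0 |>.mono fun n hn => hm_one_div ▸ hc (1 / m) n hn)
    rwa [prod_Gamma_one_div_add_div hm, Gamma_one, cpow_one, one_mul] at h
  have h := tendsto_nhds_unique (hprod z) <|
    (((hGammaSeq (m * z)).mul (hpow (m * z))).mul hc_lim).congr' <|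
      eventually_ne_atTop 0 |>.mono fun n hn => (hc z n hn).symm
  have hsqrt : ((√m : ℝ) : ℂ) = (m : ℂ) ^ (1 / 2 : ℂ) := by
    rw [Real.sqrt_eq_rpow, ofReal_cpow m.cast_nonneg]
    push_cast
    rfl
  have hsqrt_ne : ((√m : ℝ) : ℂ) ≠ 0 := by simpa using hm
  rw [h, one_div (m : ℂ), inv_cpow _ _ (by simp [pi_ne_zero.symm]), cpow_sub _ _ hmC, ← hsqrt,
    ofReal_div]
  field_simp
  rw [← ofReal_pow, Real.sq_sqrt m.cast_nonneg, ofReal_natCast]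
  ring

end Complex

theorem stmt9_general (x : ℂ) (p k : ℝ) (hp : 0 < p) (hk : 0 < k)
    (m : ℕ) (hm : 2 ≤ m) :
    ∏ r ∈ Finset.range m, pkGamma p k (x + k * r / m)
      = ((p ^ (((m : ℝ) - 1) / 2) / k ^ (m - 1) : ℝ) : ℂ)
        * (((2 * π) ^ (((m : ℝ) - 1) / 2) : ℝ) : ℂ)
        * (m : ℂ) ^ ((1 / 2 : ℂ) - m * x / k)
        * pkGamma p k (m * x) := by
  have hm0 : m ≠ 0 := by omega
  have hkC : (k : ℂ) ≠ 0 := Complex.ofReal_ne_zero.mpr hk.ne'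
  have hpC : (p : ℂ) ≠ 0 := Complex.ofReal_ne_zero.mpr hp.ne'
  set z := x / k
  have hterm (r : ℕ) :
      pkGamma p k (x + k * r / m) = p ^ (z + r / m) / k * Complex.Gamma (z + r / m) := by
    rw [pkGamma, show (x + k * r / m) / k = z + r / m by simp only [z]; field_simp]
  have hmz : (m : ℂ) * x / k = m * z := by ring
  rw [prod_congr rfl fun r _ => hterm r, prod_mul_distrib, prod_div_distrib, prod_const,
    card_range, Complex.prod_cpow_eq_cpow_sum hpC, Complex.sum_range_add_natCast_div hm0,
    Complex.prod_Gamma_add_div hm0, pkGamma, hmz, Complex.cpow_add _ _ hpC]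
  have hp_rpow : (p : ℂ) ^ (((m : ℂ) - 1) / 2) = ((p ^ (((m : ℝ) - 1) / 2) : ℝ) : ℂ) := by
    rw [Complex.ofReal_cpow hp.le]
    push_cast
    rfl
  have hk_pow : (k : ℂ) ^ m = k ^ (m - 1) * k := by rw [← pow_succ, Nat.sub_add_cancel (by omega)]
  rw [hp_rpow, hk_pow]
  push_cast
  field_simp

theorem stmt9 (x : ℂ) (hx : 0 < x.re) (p k : ℝ) (hp : 0 < p) (hk : 0 < k)
    (m : ℕ) (hm : 2 ≤ m) :
    ∏ r ∈ Finset.range m, pkGamma p k (x + k * r / m)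
      = ((p ^ (((m : ℝ) - 1) / 2) / k ^ (m - 1) : ℝ) : ℂ)
        * (((2 * π) ^ (((m : ℝ) - 1) / 2) : ℝ) : ℂ)
        * (m : ℂ) ^ ((1 / 2 : ℂ) - m * x / k)
        * pkGamma p k (m * x) :=
  stmt9_general x p k hp hk m hm
end

section
/- For x ∈ ℂ with Re(x) > 0, p, k > 0, and a > 0, one has _pΓ_k(x) = a^{x/k} · ∫₀^∞ e^{-(t^k/p)·a} t^{x-1} dt. -/
/-!
Substituting `t ↦ a ^ (1 / k) * t` turns `e^{-(t^k/p)·a}` into `e^{-t^k/p}`, and the Mellin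
transform scales by `(a ^ (1 / k)) ^ (-x) = a ^ (-x / k)` under a dilation of its argument.
-/

open MeasureTheory Set

theorem mellin_comp_rpow_mul {E : Type*} [NormedAddCommGroup E] [NormedSpace ℂ E]
    (f : ℝ → E) (s : ℂ) {a k : ℝ} (ha : 0 < a) (hk : k ≠ 0) :
    mellin (fun t => f (t ^ k * a)) s = (a : ℂ) ^ (-s / k) • mellin (fun t => f (t ^ k)) s := by
  set c := a ^ k⁻¹
  have hc : 0 < c := Real.rpow_pos_of_pos ha _
  have hdilate : ∀ t ∈ Ioi (0 : ℝ), (t : ℂ) ^ (s - 1) • f (t ^ k * a)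
      = (t : ℂ) ^ (s - 1) • f ((c * t) ^ k) := by
    intro t ht
    rw [Real.mul_rpow hc.le (le_of_lt ht), ← Real.rpow_mul ha.le, inv_mul_cancel₀ hk,
      Real.rpow_one, mul_comm a]
  have hscale : (c : ℂ) ^ (-s) = (a : ℂ) ^ (-s / k) := by
    rw [← Complex.cpow_mul_ofReal_nonneg ha.le, Complex.ofReal_inv, inv_mul_eq_div]
  rw [mellin, setIntegral_congr_fun measurableSet_Ioi hdilate, ← hscale,
    ← mellin_comp_mul_left (fun t => f (t ^ k)) s hc, mellin]

theorem stmt11_general (x : ℂ) (p k a : ℝ) (hk : 0 < k) (ha : 0 < a) :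
    ∫ t in Set.Ioi (0 : ℝ), (Real.exp (-(t ^ k) / p) : ℂ) * (t : ℂ) ^ (x - 1)
      = (a : ℂ) ^ (x / k) *
        ∫ t in Set.Ioi (0 : ℝ), (Real.exp (-(t ^ k / p) * a) : ℂ) * (t : ℂ) ^ (x - 1) := by
  set f : ℝ → ℂ := fun u => (Real.exp (-u / p) : ℂ)
  have hlhs : ∫ t in Ioi (0 : ℝ), (Real.exp (-(t ^ k) / p) : ℂ) * (t : ℂ) ^ (x - 1)
      = mellin (fun t => f (t ^ k)) x := by
    simp only [mellin, f, smul_eq_mul, mul_comm]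
  have hrhs : ∫ t in Ioi (0 : ℝ), (Real.exp (-(t ^ k / p) * a) : ℂ) * (t : ℂ) ^ (x - 1)
      = mellin (fun t => f (t ^ k * a)) x := by
    simp only [mellin, f, smul_eq_mul, mul_comm _ (Complex.ofReal _), neg_div, neg_mul,
      mul_div_right_comm]
  have ha' : (a : ℂ) ≠ 0 := Complex.ofReal_ne_zero.mpr ha.ne'
  rw [hlhs, hrhs, mellin_comp_rpow_mul f x ha hk.ne', smul_eq_mul, ← mul_assoc,
    ← Complex.cpow_add _ _ ha', neg_div, add_neg_cancel, Complex.cpow_zero, one_mul]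

theorem stmt11 (x : ℂ) (hx : 0 < x.re) (p k a : ℝ) (hp : 0 < p) (hk : 0 < k) (ha : 0 < a) :
    ∫ t in Set.Ioi (0 : ℝ), (Real.exp (-(t ^ k) / p) : ℂ) * (t : ℂ) ^ (x - 1)
      = (a : ℂ) ^ (x / k) *
        ∫ t in Set.Ioi (0 : ℝ), (Real.exp (-(t ^ k / p) * a) : ℂ) * (t : ℂ) ^ (x - 1) :=
  stmt11_general x p k a hk ha
end
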